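/- Let C₀(Q) ⊆ A be a central non-degenerate inclusion such that the set Q^unif_simple = {q ∈ Q : A/J^unif_q is simple} is dense in Q. If there exists an essentially faithful conditional expectation E : A → C₀(Q), then the inclusion C₀(Q) ⊆ A is essential. -/

import Mathlib

open scoped ComplexOrder
open ZeroAtInfty

/-- The smallest closed two-sided ideal of `A` containing `S` (as a set): the intersection of
all closed two-sided ideals containing `S`. -/
def closedIdealGenBy {A : Type*} [NonUnitalCStarAlgebra A] (S : Set A) : Set A :=
  ⋂₀ {L : Set A | (∃ I : TwoSidedIdeal A, (I : Set A) = L) ∧ IsClosed L ∧ S ⊆ L}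

/-- `J^unif_q`: the closed two-sided ideal of `A` generated by
`C_{0,q}(Q) = {f ∈ C₀(Q) : f q = 0}` (viewed in `A` via the inclusion `ι`). -/
def Junif {Q : Type*} [TopologicalSpace Q] [LocallyCompactSpace Q] [T2Space Q]
    {A : Type*} [NonUnitalCStarAlgebra A] (ι : C₀(Q, ℂ) →⋆ₙₐ[ℂ] A) (q : Q) : Set A :=
  closedIdealGenBy {a : A | ∃ f : C₀(Q, ℂ), f q = 0 ∧ a = ι f}

/-- `A / J` is a simple C*-algebra, encoded via the correspondence between closed two-sided
ideals of `A / J` and closed two-sided ideals of `A` containing `J`: `J` is proper and the only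
closed two-sided ideals of `A` containing `J` are `J` itself and `A`. -/
def QuotientSimpleBy {A : Type*} [NonUnitalCStarAlgebra A] (J : Set A) : Prop :=
  J ≠ Set.univ ∧ ∀ L : TwoSidedIdeal A, IsClosed (L : Set A) → J ⊆ (L : Set A) →
    (L : Set A) = J ∨ (L : Set A) = Set.univ

/-- The inclusion `Bs ⊆ A` is essential. -/
def EssentialIncl {A : Type*} [NonUnitalCStarAlgebra A] (Bs : Set A) : Prop :=
  ∀ L : TwoSidedIdeal A, IsClosed (L : Set A) → (L : Set A) ≠ Set.univ →
    Bs ∩ (L : Set A) = {0} → (L : Set A) = {0}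

/-!
Let `L` be a closed ideal of `A` meeting `C₀(Q)` only in `0`. Since `E` is essentially faithful it
suffices that `E` vanishes on `L`, and since `E x` is continuous and the simple points are dense,
that `E x q = 0` for `x ∈ L` and each `q` with `A / J^unif_q` simple.

The functional `a ↦ E a q` kills `J^unif_q`: a function `f` with `f q = 0` factors as `g * h` with
`g q = 0`, so `E (f * d) = g * E d * h` vanishes at `q`. The elements `a` for which `a * g` comes
arbitrarily close to `L` for bumps `g` at `q` form a closed ideal containing `J^unif_q` and `L`.
By simplicity it is `J^unif_q`, and then `L ⊆ J^unif_q`, or it is all of `A`. The latter is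
impossible: a spectral-radius estimate shows that `A → A / L` is isometric on nonnegative
functions, whereas a product of bumps at `q` has norm `1`.
-/

open Filter Topology

noncomputable section

lemma continuous_div_sqrt_norm : Continuous fun z : ℂ ↦ z / (√‖z‖ : ℂ) := by
  have hnorm (z : ℂ) : ‖z / (√‖z‖ : ℂ)‖ = √‖z‖ := by
    rw [norm_div, Complex.norm_real, Real.norm_of_nonneg (Real.sqrt_nonneg _), Real.div_sqrt]
  refine continuous_iff_continuousAt.2 fun z ↦ ?_
  rcases eq_or_ne z 0 with rfl | hz
  · rw [ContinuousAt, zero_div, tendsto_zero_iff_norm_tendsto_zero]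
    simp_rw [hnorm]
    exact (Real.continuous_sqrt.comp continuous_norm).tendsto' (0 : ℂ) 0 (by simp)
  · refine continuousAt_id.div (by fun_prop) ?_
    simpa using hz

namespace ZeroAtInftyContinuousMap

variable {Q : Type*} [TopologicalSpace Q]

section Norm

variable {β : Type*} [NormedAddCommGroup β]

lemma norm_apply_le_norm (f : C₀(Q, β)) (x : Q) : ‖f x‖ ≤ ‖f‖ := by
  rw [← norm_toBCF_eq_norm]
  exact f.toBCF.norm_coe_le_norm x

lemma norm_le_of_forall_le {f : C₀(Q, β)} {C : ℝ} (hC : 0 ≤ C) (h : ∀ x, ‖f x‖ ≤ C) :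
    ‖f‖ ≤ C := by
  rw [← norm_toBCF_eq_norm]
  exact (BoundedContinuousFunction.norm_le hC).2 h

lemma continuous_eval_at (x : Q) : Continuous fun f : C₀(Q, β) ↦ f x :=
  (continuous_eval_const (F := BoundedContinuousFunction Q β) x).comp isometry_toBCF.continuous

end Norm

def compLeft {β γ : Type*} [TopologicalSpace β] [Zero β] [TopologicalSpace γ] [Zero γ]
    (φ : β → γ) (hφ : Continuous φ) (h0 : φ 0 = 0) (f : C₀(Q, β)) : C₀(Q, γ) where
  toFun := φ ∘ f
  continuous_toFun := hφ.comp f.continuous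
  zero_at_infty' := h0 ▸ (hφ.tendsto 0).comp (zero_at_infty f)

@[simp]
lemma compLeft_apply {β γ : Type*} [TopologicalSpace β] [Zero β] [TopologicalSpace γ] [Zero γ]
    (φ : β → γ) (hφ : Continuous φ) (h0 : φ 0 = 0) (f : C₀(Q, β)) (x : Q) :
    compLeft φ hφ h0 f x = φ (f x) :=
  rfl

/-- `f ^ (n + 1)`: without a unit, `C₀(Q, ℂ)` carries no `Monoid` structure. -/
def powSucc (f : C₀(Q, ℂ)) (n : ℕ) : C₀(Q, ℂ) :=
  compLeft (· ^ (n + 1)) (continuous_pow _) (zero_pow n.succ_ne_zero) f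

@[simp]
lemma powSucc_apply (f : C₀(Q, ℂ)) (n : ℕ) (x : Q) : powSucc f n x = f x ^ (n + 1) :=
  rfl

lemma powSucc_zero (f : C₀(Q, ℂ)) : powSucc f 0 = f :=
  ext fun x ↦ by simp

lemma powSucc_succ (f : C₀(Q, ℂ)) (n : ℕ) : powSucc f (n + 1) = f * powSucc f n :=
  ext fun x ↦ by simp [pow_succ']

/-- Take `f = √|f| · (f / √|f|)`; the second factor is continuous since `|f / √|f|| = √|f|`
(with `0 / 0 = 0` at the zeros of `f`). -/
lemma exists_mul_eq_of_apply_eq_zero {f : C₀(Q, ℂ)} {q : Q} (hf : f q = 0) :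
    ∃ g h : C₀(Q, ℂ), g q = 0 ∧ g * h = f := by
  refine ⟨compLeft (fun z ↦ (√‖z‖ : ℂ)) (by fun_prop) (by simp) f,
    compLeft _ continuous_div_sqrt_norm (by simp) f, by simp [hf], ext fun x ↦ ?_⟩
  rcases eq_or_ne (f x) 0 with hx | hx
  · simp [hx]
  · simp [mul_div_cancel₀, hx]

/-- For the order on `ℂ`, `0 ≤ z ∧ z ≤ 1` says that `z` is a real number in `[0, 1]`. -/
def IsBumpAt (q : Q) (g : C₀(Q, ℂ)) : Prop :=
  g q = 1 ∧ ∀ x, 0 ≤ g x ∧ g x ≤ 1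

lemma IsBumpAt.mul {q : Q} {g h : C₀(Q, ℂ)} (hg : IsBumpAt q g) (hh : IsBumpAt q h) :
    IsBumpAt q (g * h) := by
  refine ⟨by simp [hg.1, hh.1], fun x ↦ ?_⟩
  obtain ⟨hg₀, hg₁⟩ := hg.2 x
  obtain ⟨hh₀, hh₁⟩ := hh.2 x
  exact ⟨by simpa using mul_nonneg hg₀ hh₀, by simpa using mul_le_one₀ hg₁ hh₀ hh₁⟩

lemma IsBumpAt.norm_le_one {q : Q} {g : C₀(Q, ℂ)} (hg : IsBumpAt q g) : ‖g‖ ≤ 1 :=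
  norm_le_of_forall_le zero_le_one fun x ↦
    (CStarAlgebra.norm_le_one_iff_of_nonneg _ (hg.2 x).1).2 (hg.2 x).2

lemma exists_isBumpAt [LocallyCompactSpace Q] [T2Space Q] {q : Q} {U : Set Q}
    (hU : IsOpen U) (hq : q ∈ U) : ∃ g, IsBumpAt q g ∧ ∀ x ∉ U, g x = 0 := by
  obtain ⟨φ, hφq, hφU, hφc, hφ01⟩ := exists_continuous_one_zero_of_isCompact isCompact_singleton
    hU.isClosed_compl (Set.disjoint_singleton_left.2 fun h ↦ h hq)
  refine ⟨⟨⟨fun x ↦ (φ x : ℂ), by fun_prop⟩,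
    (hφc.comp_left Complex.ofReal_zero).is_zero_at_infty⟩, ⟨?_, fun x ↦ ?_⟩, fun x hx ↦ ?_⟩
  · simpa using hφq rfl
  · simpa [← Complex.ofReal_one, Complex.real_le_real] using hφ01 x
  · simpa using hφU hx

end ZeroAtInftyContinuousMap

lemma TwoSidedIdeal.exists_mem_norm_mul_sub_le {R : Type*} [NonUnitalNormedRing R]
    (L : TwoSidedIdeal R) {a b l₁ l₂ : R} (h₁ : l₁ ∈ L) (h₂ : l₂ ∈ L) :
    ∃ l ∈ L, ‖a * b - l‖ ≤ ‖a - l₁‖ * ‖b - l₂‖ := by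
  refine ⟨a * l₂ + l₁ * b - l₁ * l₂,
    L.sub_mem (L.add_mem (L.mul_mem_left _ _ h₂) (L.mul_mem_right _ _ h₁))
      (L.mul_mem_right _ _ h₁), ?_⟩
  calc ‖a * b - (a * l₂ + l₁ * b - l₁ * l₂)‖ = ‖(a - l₁) * (b - l₂)‖ := by noncomm_ring
    _ ≤ ‖a - l₁‖ * ‖b - l₂‖ := norm_mul_le _ _

namespace AddSubgroup

variable {R : Type*} [NonUnitalRing R] (T : AddSubgroup R)

def idealCore : TwoSidedIdeal R :=
  .mk' {a | a ∈ T ∧ (∀ b, b * a ∈ T) ∧ (∀ c, a * c ∈ T) ∧ ∀ b c, b * a * c ∈ T}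
    ⟨T.zero_mem, by simp, by simp, by simp⟩
    (fun ⟨hx, hx₁, hx₂, hx₃⟩ ⟨hy, hy₁, hy₂, hy₃⟩ ↦ ⟨T.add_mem hx hy,
      fun b ↦ by simpa [mul_add] using T.add_mem (hx₁ b) (hy₁ b),
      fun c ↦ by simpa [add_mul] using T.add_mem (hx₂ c) (hy₂ c),
      fun b c ↦ by simpa [mul_add, add_mul] using T.add_mem (hx₃ b c) (hy₃ b c)⟩)
    (fun ⟨hx, hx₁, hx₂, hx₃⟩ ↦ ⟨T.neg_mem hx, fun b ↦ by simpa using T.neg_mem (hx₁ b),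
      fun c ↦ by simpa using T.neg_mem (hx₂ c), fun b c ↦ by simpa using T.neg_mem (hx₃ b c)⟩)
    (fun {x _} ⟨_, hy₁, _, hy₃⟩ ↦ ⟨hy₁ x, fun b ↦ by simpa [mul_assoc] using hy₁ (b * x),
      fun c ↦ hy₃ x c, fun b c ↦ by simpa [mul_assoc] using hy₃ (b * x) c⟩)
    (fun {_ y} ⟨_, _, hx₂, hx₃⟩ ↦ ⟨hx₂ y, fun b ↦ by simpa [mul_assoc] using hx₃ b y,
      fun c ↦ by simpa [mul_assoc] using hx₂ (y * c),
      fun b c ↦ by simpa [mul_assoc] using hx₃ b (y * c)⟩)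

lemma mem_idealCore {a : R} :
    a ∈ T.idealCore ↔ a ∈ T ∧ (∀ b, b * a ∈ T) ∧ (∀ c, a * c ∈ T) ∧ ∀ b c, b * a * c ∈ T :=
  TwoSidedIdeal.mem_mk' ..

lemma isClosed_idealCore [TopologicalSpace R] [IsTopologicalRing R] (hT : IsClosed (T : Set R)) :
    IsClosed (T.idealCore : Set R) := by
  have : (T.idealCore : Set R) = (T : Set R) ∩ (⋂ b, (b * ·) ⁻¹' T) ∩ (⋂ c, (· * c) ⁻¹' T) ∩
      ⋂ b, ⋂ c, (fun a ↦ b * a * c) ⁻¹' T := by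
    ext a
    simp [mem_idealCore, and_assoc]
  rw [this]
  refine ((hT.inter (isClosed_iInter fun b ↦ hT.preimage ?_)).inter
    (isClosed_iInter fun c ↦ hT.preimage ?_)).inter
    (isClosed_iInter fun b ↦ isClosed_iInter fun c ↦ hT.preimage ?_) <;> fun_prop

end AddSubgroup

lemma closedIdealGenBy_subset {A : Type*} [NonUnitalCStarAlgebra A] {S : Set A}
    {I : TwoSidedIdeal A} (hI : IsClosed (I : Set A)) (hS : S ⊆ I) :
    closedIdealGenBy S ⊆ I :=
  Set.sInter_subset_of_mem ⟨⟨I, rfl⟩, hI, hS⟩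

lemma max_sub_eq_div_mul_pow {t c : ℝ} (hc : 0 < c) (m : ℕ) :
    max (t - c) 0 = max (t - c) 0 / max t c ^ m * t ^ m := by
  rcases le_or_gt t c with htc | htc
  · simp [htc]
  · rw [max_eq_left htc.le, div_mul_cancel₀ _ (pow_ne_zero _ (hc.trans htc).ne')]

lemma max_sub_div_pow_le {t c : ℝ} (ht : 0 ≤ t) (hc : 0 < c) (m : ℕ) :
    max (t - c) 0 / max t c ^ m ≤ t / c ^ m :=
  div_le_div₀ ht (max_le (by linarith) ht) (pow_pos hc m)
    (pow_le_pow_left₀ hc.le (le_max_right t c) m)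

open ZeroAtInftyContinuousMap

section CentralInclusion

variable {Q : Type*} [TopologicalSpace Q] {A : Type*} [NonUnitalCStarAlgebra A]
  {ι : C₀(Q, ℂ) →⋆ₙₐ[ℂ] A}

lemma norm_map_le_one {q : Q} {g : C₀(Q, ℂ)} (hg : IsBumpAt q g) : ‖ι g‖ ≤ 1 :=
  (NonUnitalStarAlgHom.norm_apply_le ι g).trans hg.norm_le_one

lemma expectation_mul_apply_eq_zero (hcentral : ∀ (f : C₀(Q, ℂ)) (a : A), ι f * a = a * ι f)
    {E : A → C₀(Q, ℂ)}
    (hEmod : ∀ (f₁ f₂ : C₀(Q, ℂ)) (a : A), E (ι f₁ * a * ι f₂) = f₁ * E a * f₂)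
    {f : C₀(Q, ℂ)} {q : Q} (hf : f q = 0) (d : A) : E (ι f * d) q = 0 := by
  obtain ⟨g, h, hg, rfl⟩ := exists_mul_eq_of_apply_eq_zero hf
  rw [map_mul, mul_assoc, hcentral h, ← mul_assoc, hEmod]
  simp [hg]

lemma exists_mem_norm_map_powSucc_sub_le (L : TwoSidedIdeal A) {h : C₀(Q, ℂ)} {l : A}
    (hl : l ∈ L) (n : ℕ) : ∃ l' ∈ L, ‖ι (powSucc h n) - l'‖ ≤ ‖ι h - l‖ ^ (n + 1) := by
  induction n with
  | zero => exact ⟨l, hl, by simp [powSucc_zero]⟩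
  | succ n ih =>
    obtain ⟨l', hl', hle⟩ := ih
    obtain ⟨l'', hl'', hle'⟩ := L.exists_mem_norm_mul_sub_le (a := ι h) hl hl'
    refine ⟨l'', hl'', ?_⟩
    rw [powSucc_succ, map_mul, pow_succ']
    exact hle'.trans (mul_le_mul_of_nonneg_left hle (norm_nonneg _))

lemma norm_le_norm_map_sub {L : TwoSidedIdeal A} (hLc : IsClosed (L : Set A))
    (hL : ∀ f, ι f ∈ L → f = 0) {h : C₀(Q, ℂ)} (hh : ∀ x, 0 ≤ h x) {l : A} (hl : l ∈ L) :
    ‖h‖ ≤ ‖ι h - l‖ := by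
  /- For `c > ‖ι h - l‖`: `k = (|h| - c)⁺ = s n * h ^ (n + 1)` with `‖s n‖ ≤ ‖h‖ / c ^ (n + 1)`,
  while `ι (h ^ (n + 1))` lies within `‖ι h - l‖ ^ (n + 1)` of `L`. Hence `ι k ∈ L`, so `k = 0`,
  i.e. `|h| ≤ c`. -/
  refine le_of_forall_gt_imp_ge_of_dense fun c hc ↦ ?_
  have hc₀ : 0 < c := (norm_nonneg _).trans_lt hc
  have hpos (t : ℝ) : 0 < max t c := hc₀.trans_le (le_max_right t c)
  let k := compLeft (fun z : ℂ ↦ ((max (‖z‖ - c) 0 : ℝ) : ℂ)) (by fun_prop) (by simp [hc₀.le]) h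
  let s (n : ℕ) := compLeft (fun z : ℂ ↦ ((max (‖z‖ - c) 0 / max ‖z‖ c ^ (n + 1) : ℝ) : ℂ))
    (by fun_prop (disch := exact fun z ↦ (pow_pos (hpos _) _).ne')) (by simp [hc₀.le]) h
  have hks (n : ℕ) : k = s n * powSucc h n := ext fun x ↦ by
    simp only [k, s, compLeft_apply, mul_apply, powSucc_apply]
    conv_lhs => rw [max_sub_eq_div_mul_pow hc₀ (n + 1), Complex.ofReal_mul, Complex.ofReal_pow,
      Complex.norm_of_nonneg' (hh x)]
  have hs (n : ℕ) : ‖ι (s n)‖ ≤ ‖h‖ / c ^ (n + 1) :=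
    (NonUnitalStarAlgHom.norm_apply_le ι _).trans <|
      norm_le_of_forall_le (by positivity) fun x ↦ by
      rw [compLeft_apply, Complex.norm_real, Real.norm_of_nonneg (by positivity)]
      exact (max_sub_div_pow_le (norm_nonneg _) hc₀ _).trans
        (div_le_div_of_nonneg_right (norm_apply_le_norm h x) (by positivity))
  choose l' hl' hl'_le using exists_mem_norm_map_powSucc_sub_le (ι := ι) (h := h) L hl
  have hlim : Tendsto (fun n ↦ ι (s n) * l' n) atTop (𝓝 (ι k)) := by
    rw [tendsto_iff_norm_sub_tendsto_zero]
    refine squeeze_zero (g := fun n ↦ ‖h‖ * (‖ι h - l‖ / c) ^ (n + 1))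
      (fun _ ↦ norm_nonneg _) (fun n ↦ ?_) ?_
    · calc ‖ι (s n) * l' n - ι k‖ = ‖ι (s n) * (ι (powSucc h n) - l' n)‖ := by
            rw [hks n, map_mul, ← norm_neg]; noncomm_ring
        _ ≤ ‖h‖ / c ^ (n + 1) * ‖ι h - l‖ ^ (n + 1) :=
            (norm_mul_le _ _).trans (mul_le_mul (hs n) (hl'_le n) (norm_nonneg _) (by positivity))
        _ = ‖h‖ * (‖ι h - l‖ / c) ^ (n + 1) := by ring
    · simpa using ((tendsto_pow_atTop_nhds_zero_of_lt_one (by positivity)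
        ((div_lt_one hc₀).2 hc)).comp (tendsto_add_atTop_nat 1)).const_mul ‖h‖
  have hk := hL k (hLc.mem_of_tendsto hlim (.of_forall fun n ↦ L.mul_mem_left _ _ (hl' n)))
  refine norm_le_of_forall_le hc₀.le fun x ↦ ?_
  simpa [k, sub_nonpos] using congr($hk x)

/-- With `ι g` for bumps `g` at `q` acting as cut-offs near `q`, this is a closed ideal containing
`J^unif_q` and `L`; it stands in for the closure of `J^unif_q + L`. -/
def cutoffSet (ι : C₀(Q, ℂ) →⋆ₙₐ[ℂ] A) (q : Q) (L : TwoSidedIdeal A) : Set A :=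
  {a | ∀ δ > 0, ∃ g, IsBumpAt q g ∧ ∃ l ∈ L, ‖a * ι g - l‖ ≤ δ}

section Cutoff

variable {q : Q} {L : TwoSidedIdeal A}

lemma add_mem_cutoffSet {a b : A} (ha : a ∈ cutoffSet ι q L) (hb : b ∈ cutoffSet ι q L) :
    a + b ∈ cutoffSet ι q L := by
  intro δ hδ
  obtain ⟨g, hg, l, hl, hle⟩ := ha (δ / 2) (by positivity)
  obtain ⟨g', hg', l', hl', hle'⟩ := hb (δ / 2) (by positivity)
  refine ⟨g * g', hg.mul hg', l * ι g' + l' * ι g, L.add_mem (L.mul_mem_right _ _ hl)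
    (L.mul_mem_right _ _ hl'), ?_⟩
  have hab : (a + b) * ι (g * g') = a * ι g * ι g' + b * ι g' * ι g := by
    rw [add_mul, mul_assoc, mul_assoc, ← map_mul, ← map_mul, mul_comm g' g]
  calc ‖(a + b) * ι (g * g') - (l * ι g' + l' * ι g)‖
        = ‖(a * ι g - l) * ι g' + (b * ι g' - l') * ι g‖ := by
          rw [hab]; noncomm_ring
    _ ≤ δ / 2 * 1 + δ / 2 * 1 := by
      refine (norm_add_le _ _).trans (add_le_add ?_ ?_) <;>
      refine (norm_mul_le _ _).trans (mul_le_mul ‹_› (norm_map_le_one ‹_›) (norm_nonneg _)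
        (by positivity))
    _ = δ := by ring

lemma mul_mem_cutoffSet_left (c : A) {a : A} (ha : a ∈ cutoffSet ι q L) :
    c * a ∈ cutoffSet ι q L := by
  intro δ hδ
  obtain ⟨g, hg, l, hl, hle⟩ := ha (δ / (‖c‖ + 1)) (by positivity)
  refine ⟨g, hg, c * l, L.mul_mem_left _ _ hl, ?_⟩
  calc ‖c * a * ι g - c * l‖ = ‖c * (a * ι g - l)‖ := by noncomm_ring
    _ ≤ ‖c‖ * (δ / (‖c‖ + 1)) := (norm_mul_le _ _).trans (by gcongr)
    _ ≤ δ := by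
      rw [mul_div_assoc', div_le_iff₀ (by positivity)]
      nlinarith [norm_nonneg c]

lemma mul_mem_cutoffSet_right (hcentral : ∀ (f : C₀(Q, ℂ)) (a : A), ι f * a = a * ι f)
    (c : A) {a : A} (ha : a ∈ cutoffSet ι q L) : a * c ∈ cutoffSet ι q L := by
  intro δ hδ
  obtain ⟨g, hg, l, hl, hle⟩ := ha (δ / (‖c‖ + 1)) (by positivity)
  refine ⟨g, hg, l * c, L.mul_mem_right _ _ hl, ?_⟩
  calc ‖a * c * ι g - l * c‖ = ‖(a * ι g - l) * c‖ := by
        rw [mul_assoc, ← hcentral, ← mul_assoc, sub_mul]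
    _ ≤ δ / (‖c‖ + 1) * ‖c‖ := (norm_mul_le _ _).trans (by gcongr)
    _ ≤ δ := by
      rw [div_mul_eq_mul_div, div_le_iff₀ (by positivity)]
      nlinarith [norm_nonneg c]

lemma isClosed_cutoffSet : IsClosed (cutoffSet ι q L) := by
  refine isClosed_of_closure_subset fun a ha δ hδ ↦ ?_
  obtain ⟨b, hb, hab⟩ := Metric.mem_closure_iff.1 ha (δ / 2) (by positivity)
  obtain ⟨g, hg, l, hl, hle⟩ := hb (δ / 2) (by positivity)
  refine ⟨g, hg, l, hl, ?_⟩
  calc ‖a * ι g - l‖ = ‖(a - b) * ι g + (b * ι g - l)‖ := by noncomm_ring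
    _ ≤ ‖a - b‖ * 1 + δ / 2 :=
      (norm_add_le _ _).trans (add_le_add ((norm_mul_le _ _).trans
        (mul_le_mul_of_nonneg_left (norm_map_le_one hg) (norm_nonneg _))) hle)
    _ ≤ δ := by rw [← dist_eq_norm] at *; linarith

lemma map_notMem_cutoffSet (hLc : IsClosed (L : Set A)) (hL : ∀ f, ι f ∈ L → f = 0)
    {g : C₀(Q, ℂ)} (hg : IsBumpAt q g) : ι g ∉ cutoffSet ι q L := fun h ↦ by
  obtain ⟨g', hg', l, hl, hle⟩ := h (1 / 2) (by norm_num)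
  have hgg' := hg.mul hg'
  have h1 : (1 : ℝ) ≤ ‖g * g'‖ := by simpa [hgg'.1] using norm_apply_le_norm (g * g') q
  have h2 := norm_le_norm_map_sub hLc hL (fun x ↦ (hgg'.2 x).1) hl
  rw [map_mul] at h2
  linarith

variable [LocallyCompactSpace Q] [T2Space Q]

lemma subset_cutoffSet : (L : Set A) ⊆ cutoffSet ι q L := fun a ha δ hδ ↦
  let ⟨g, hg, _⟩ := exists_isBumpAt isOpen_univ (Set.mem_univ q)
  ⟨g, hg, a * ι g, L.mul_mem_right _ _ ha, by simpa using hδ.le⟩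

lemma map_mem_cutoffSet {f : C₀(Q, ℂ)} (hf : f q = 0) : ι f ∈ cutoffSet ι q L := by
  intro δ hδ
  obtain ⟨g, hg, hgU⟩ := exists_isBumpAt (U := {x | ‖f x‖ < δ})
    (isOpen_lt (by fun_prop) continuous_const) (q := q) (by simpa [hf])
  refine ⟨g, hg, 0, L.zero_mem, ?_⟩
  rw [sub_zero, ← map_mul]
  refine (NonUnitalStarAlgHom.norm_apply_le ι _).trans (norm_le_of_forall_le hδ.le fun x ↦ ?_)
  by_cases hx : ‖f x‖ < δ
  · calc ‖(f * g) x‖ = ‖f x‖ * ‖g x‖ := by simp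
      _ ≤ δ * 1 := mul_le_mul hx.le ((norm_apply_le_norm g x).trans hg.norm_le_one)
          (norm_nonneg _) hδ.le
      _ = δ := mul_one δ
  · simp [hgU x hx, hδ.le]

variable (q L) in
def cutoffIdeal (hcentral : ∀ (f : C₀(Q, ℂ)) (a : A), ι f * a = a * ι f) : TwoSidedIdeal A :=
  .mk' (cutoffSet ι q L) (subset_cutoffSet L.zero_mem) add_mem_cutoffSet
    (fun ha δ hδ ↦ by
      obtain ⟨g, hg, l, hl, hle⟩ := ha δ hδ
      exact ⟨g, hg, -l, L.neg_mem hl, by rwa [neg_mul, ← neg_sub', norm_neg]⟩)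
    (mul_mem_cutoffSet_left _) (mul_mem_cutoffSet_right hcentral _)

lemma coe_cutoffIdeal (hcentral : ∀ (f : C₀(Q, ℂ)) (a : A), ι f * a = a * ι f) :
    (cutoffIdeal q L hcentral : Set A) = cutoffSet ι q L :=
  TwoSidedIdeal.coe_mk' ..

end Cutoff

variable [LocallyCompactSpace Q] [T2Space Q]

lemma expectation_apply_eq_zero_of_mem_Junif
    (hcentral : ∀ (f : C₀(Q, ℂ)) (a : A), ι f * a = a * ι f) (E : A →L[ℂ] C₀(Q, ℂ))
    (hEproj : ∀ f : C₀(Q, ℂ), E (ι f) = f)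
    (hEmod : ∀ (f₁ f₂ : C₀(Q, ℂ)) (a : A), E (ι f₁ * a * ι f₂) = f₁ * E a * f₂)
    {q : Q} {a : A} (ha : a ∈ Junif ι q) : E a q = 0 := by
  let T : AddSubgroup A := (AddMonoidHom.mk' (fun a ↦ E a q) fun a b ↦ by simp).ker
  have hT : IsClosed (T : Set A) :=
    isClosed_eq ((continuous_eval_at q).comp E.continuous) continuous_const
  have hgen : {a : A | ∃ f : C₀(Q, ℂ), f q = 0 ∧ a = ι f} ⊆ (T.idealCore : Set A) := by
    rintro _ ⟨f, hf, rfl⟩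
    have hfd := expectation_mul_apply_eq_zero hcentral hEmod hf
    refine T.mem_idealCore.2 ⟨by simpa [T, hEproj], fun b ↦ ?_, hfd, fun b c ↦ ?_⟩
    · simpa [T, ← hcentral] using hfd b
    · simpa [T, ← hcentral, mul_assoc] using hfd (b * c)
  exact (T.mem_idealCore.1 (closedIdealGenBy_subset (T.isClosed_idealCore hT) hgen ha)).1

lemma expectation_apply_eq_zero_of_quotientSimpleBy
    (hcentral : ∀ (f : C₀(Q, ℂ)) (a : A), ι f * a = a * ι f) (E : A →L[ℂ] C₀(Q, ℂ))
    (hEproj : ∀ f : C₀(Q, ℂ), E (ι f) = f)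
    (hEmod : ∀ (f₁ f₂ : C₀(Q, ℂ)) (a : A), E (ι f₁ * a * ι f₂) = f₁ * E a * f₂)
    {L : TwoSidedIdeal A} (hLc : IsClosed (L : Set A)) (hL : ∀ f, ι f ∈ L → f = 0)
    {q : Q} (hq : QuotientSimpleBy (Junif ι q)) {x : A} (hx : x ∈ L) : E x q = 0 := by
  have hZ : IsClosed (cutoffIdeal q L hcentral : Set A) := by
    rw [coe_cutoffIdeal]
    exact isClosed_cutoffSet
  have hJZ : Junif ι q ⊆ cutoffIdeal q L hcentral := closedIdealGenBy_subset hZ <| by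
    rintro _ ⟨f, hf, rfl⟩
    rw [coe_cutoffIdeal]
    exact map_mem_cutoffSet hf
  rcases hq.2 _ hZ hJZ with hZJ | hZuniv
  · refine expectation_apply_eq_zero_of_mem_Junif hcentral E hEproj hEmod ?_
    rw [← hZJ, coe_cutoffIdeal]
    exact subset_cutoffSet hx
  · obtain ⟨g, hg, -⟩ := exists_isBumpAt isOpen_univ (Set.mem_univ q)
    refine absurd ?_ (map_notMem_cutoffSet hLc hL hg)
    rw [← coe_cutoffIdeal hcentral, hZuniv]
    trivial

end CentralInclusion

end

theorem stmt9_general {Q : Type*} [TopologicalSpace Q] [LocallyCompactSpace Q] [T2Space Q]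
    {A : Type*} [NonUnitalCStarAlgebra A]
    (ι : C₀(Q, ℂ) →⋆ₙₐ[ℂ] A) (hisom : Isometry ι)
    (hcentral : ∀ (f : C₀(Q, ℂ)) (a : A), ι f * a = a * ι f)
    (hdense : Dense {q : Q | QuotientSimpleBy (Junif ι q)})
    (E : A →L[ℂ] C₀(Q, ℂ))
    (hEproj : ∀ f : C₀(Q, ℂ), E (ι f) = f)
    (hEmod : ∀ (f₁ f₂ : C₀(Q, ℂ)) (a : A), E (ι f₁ * a * ι f₂) = f₁ * E a * f₂)
    (hEessfaithful : ∀ L : TwoSidedIdeal A, IsClosed (L : Set A) →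
      (∀ x ∈ L, E x = 0) → (L : Set A) = {0}) :
    EssentialIncl (Set.range ι) := by
  intro L hLc _ hLinter
  have hL (f : C₀(Q, ℂ)) (hf : ι f ∈ L) : f = 0 := by
    have : ι f ∈ ({0} : Set A) := hLinter ▸ ⟨⟨f, rfl⟩, hf⟩
    exact hisom.injective (this.trans (map_zero ι).symm)
  refine hEessfaithful L hLc fun x hx ↦ DFunLike.coe_injective ?_
  exact Continuous.ext_on hdense (E x).continuous continuous_const fun q hq ↦
    expectation_apply_eq_zero_of_quotientSimpleBy hcentral E hEproj hEmod hLc hL hq hx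

/-- For a central non-degenerate inclusion `C₀(Q) ⊆ A` with
`Q^unif_simple` dense in `Q`, if there is an essentially faithful conditional expectation
`E : A → C₀(Q)`, then the inclusion `C₀(Q) ⊆ A` is essential. -/
theorem stmt9 {Q : Type*} [TopologicalSpace Q] [LocallyCompactSpace Q] [T2Space Q]
    {A : Type*} [NonUnitalCStarAlgebra A] [PartialOrder A] [StarOrderedRing A]
    (ι : C₀(Q, ℂ) →⋆ₙₐ[ℂ] A) (hisom : Isometry ι)
    (hcentral : ∀ (f : C₀(Q, ℂ)) (a : A), ι f * a = a * ι f)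
    (hnondeg : closure
      (Submodule.span ℂ {x : A | ∃ (f : C₀(Q, ℂ)) (a : A), x = ι f * a} : Set A) = Set.univ)
    (hdense : Dense {q : Q | QuotientSimpleBy (Junif ι q)})
    (E : A →L[ℂ] C₀(Q, ℂ))
    (hEnorm : ‖E‖ = 1)
    (hEproj : ∀ f : C₀(Q, ℂ), E (ι f) = f)
    (hEmod : ∀ (f₁ f₂ : C₀(Q, ℂ)) (a : A), E (ι f₁ * a * ι f₂) = f₁ * E a * f₂)
    (hEpos : ∀ a : A, 0 ≤ a → ∀ q : Q, 0 ≤ E a q)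
    (hEessfaithful : ∀ L : TwoSidedIdeal A, IsClosed (L : Set A) →
      (∀ x ∈ L, E x = 0) → (L : Set A) = {0}) :
    EssentialIncl (Set.range ι) :=
  stmt9_general ι hisom hcentral hdense E hEproj hEmod hEessfaithful
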